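/- For any x ∈ [0,1], p ∈ (0,1], and γ > 0 with coefficient α satisfying 0 < α ≤ 2γ, the conditional moment-generating-function inequality E[exp(α · (x/(p+γ)) · B)] ≤ exp(α x) holds, where B is a Bernoulli(p) random variable; equivalently, p·exp(αx/(p+γ)) + (1-p) ≤ exp(αx). -/

import Mathlib

/-!
With `s = α x ∈ [0, 2γ]` and `z = s / p`, the bound `log (1 + z) ≥ 2z / (z + 2) = 2s / (s + 2p)`
dominates `s / (p + γ)` exactly because `s ≤ 2γ`. Hence `p · exp (s / (p + γ)) ≤ p + s`,
and `1 + s ≤ exp s` finishes.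
-/

open Real

lemma div_add_le_log_one_add_div {s p γ : ℝ} (hs : 0 ≤ s) (hp : 0 < p) (hsγ : s ≤ 2 * γ) :
    s / (p + γ) ≤ log (1 + s / p) := by
  have hpγ : 0 < p + γ := by linarith
  calc s / (p + γ) ≤ 2 * s / (s + 2 * p) := by
        rw [div_le_div_iff₀ hpγ (by linarith)]
        nlinarith
    _ = 2 * (s / p) / (s / p + 2) := by field_simp
    _ ≤ log (1 + s / p) := le_log_one_add_of_nonneg (by positivity)

lemma mul_exp_div_add_le_add {s p γ : ℝ} (hs : 0 ≤ s) (hp : 0 < p) (hsγ : s ≤ 2 * γ) :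
    p * exp (s / (p + γ)) ≤ p + s := by
  have hexp : exp (s / (p + γ)) ≤ 1 + s / p := by
    calc exp (s / (p + γ)) ≤ exp (log (1 + s / p)) :=
          exp_le_exp.mpr (div_add_le_log_one_add_div hs hp hsγ)
      _ = 1 + s / p := exp_log (by positivity)
  calc p * exp (s / (p + γ)) ≤ p * (1 + s / p) := mul_le_mul_of_nonneg_left hexp hp.le
    _ = p + s := by field_simp

theorem stmt_4_general (x p γ α : ℝ) (hx0 : 0 ≤ x) (hx1 : x ≤ 1)
    (hp0 : 0 < p) (hα0 : 0 < α) (hα : α ≤ 2 * γ) :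
    p * Real.exp (α * x / (p + γ)) + (1 - p) ≤ Real.exp (α * x) := by
  have hs : 0 ≤ α * x := by positivity
  have hsγ : α * x ≤ 2 * γ := by nlinarith
  linarith [mul_exp_div_add_le_add hs hp0 hsγ, add_one_le_exp (α * x)]

/-- One-step MGF inequality in the supermartingale argument for IX estimators:
`p·exp(αx/(p+γ)) + (1-p) ≤ exp(αx)`. -/
theorem stmt_4 (x p γ α : ℝ) (hx0 : 0 ≤ x) (hx1 : x ≤ 1)
    (hp0 : 0 < p) (hp1 : p ≤ 1) (hγ : 0 < γ) (hα0 : 0 < α) (hα : α ≤ 2 * γ) :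
    p * Real.exp (α * x / (p + γ)) + (1 - p) ≤ Real.exp (α * x) :=
  stmt_4_general x p γ α hx0 hx1 hp0 hα0 hα
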